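/- arXiv:1111.3511 — 6 statements merged into one kernel-verified Lean document; each statement's English description precedes it below -/
import Mathlib

section
/- Let t > 0, h > 0 and s ∈ ℝ. If a point x = (x₁, x₂) ∈ ℝ² satisfies x₁·sinh(s + k·t) − x₂·cosh(s + k·t) ≤ −h for every integer k, then x₂ > 0 and x₁² − x₂² < 0; that is, every point of an elementary t-convex polygon is a future time-like vector of the Lorentz plane. -/
lemma exists_exp_int_lt (t s c : ℝ) (ht : 0 < t) (hc : 0 < c) :
    ∃ k : ℤ, Real.exp (s + k * t) < c := by
  obtain ⟨k, hk⟩ := exists_int_lt ((Real.log c - s) / t)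
  refine ⟨k, ?_⟩
  rw [← Real.exp_log hc]
  apply Real.exp_lt_exp.2
  have := (lt_div_iff₀ ht).mp hk
  linarith

/-- Every point of an elementary `t`-convex polygon of the Lorentz plane
(the intersection of the half-planes with inward normals `H_t^k (h·η)`, where
`η = (sinh s, cosh s)`) is a future time-like vector. -/
theorem elementary_t_convex_subset_future_cone
    (t h s : ℝ) (ht : 0 < t) (hh : 0 < h) (x₁ x₂ : ℝ)
    (hx : ∀ k : ℤ, x₁ * Real.sinh (s + k * t) - x₂ * Real.cosh (s + k * t) ≤ -h) :
    0 < x₂ ∧ x₁ ^ 2 - x₂ ^ 2 < 0 := by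
  have key : ∀ k : ℤ, (x₁ - x₂) * Real.exp (s + k * t)
      - (x₁ + x₂) * Real.exp (-(s + k * t)) ≤ -(2 * h) := by
    intro k
    have := hx k
    rw [Real.sinh_eq, Real.cosh_eq] at this
    linarith
  -- x₁ - x₂ < 0
  have h1 : x₁ - x₂ < 0 := by
    by_contra hcon
    push_neg at hcon
    have hsum : 0 < x₁ + x₂ := by
      have := key 0
      have e1 := Real.exp_pos (s + (0:ℤ) * t)
      have e2 := Real.exp_pos (-(s + (0:ℤ) * t))
      nlinarith
    obtain ⟨k, hk⟩ := exists_exp_int_lt t (-s) (2 * h / (x₁ + x₂)) ht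
      (by positivity)
    have hkey := key (-k)
    push_cast at hkey
    have hk' : Real.exp (-(s + -(k:ℝ) * t)) < 2 * h / (x₁ + x₂) := by
      rw [show -(s + -(k:ℝ) * t) = -s + k * t by ring]; exact hk
    have e1 := Real.exp_pos (s + -(k:ℝ) * t)
    rw [lt_div_iff₀ hsum] at hk'
    nlinarith
  -- x₁ + x₂ > 0
  have h2 : 0 < x₁ + x₂ := by
    by_contra hcon
    push_neg at hcon
    have hdiff : x₂ - x₁ > 0 := by linarith
    obtain ⟨k, hk⟩ := exists_exp_int_lt t s (2 * h / (x₂ - x₁)) ht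
      (by positivity)
    have := key k
    have e2 := Real.exp_pos (-(s + (k : ℤ) * t))
    have h3 : (x₂ - x₁) * Real.exp (s + (k : ℤ) * t) < 2 * h := by
      rw [lt_div_iff₀ hdiff] at hk
      nlinarith
    nlinarith
  constructor
  · linarith
  · nlinarith
end

section
/- Let s ≠ s' be real numbers and set u = (sinh s, cosh s), v = (sinh s', cosh s'). If x ∈ ℝ² satisfies ⟨x,u⟩₁ = −1 and ⟨x,v⟩₁ = −1 (i.e. x₁ sinh s − x₂ cosh s = −1 and x₁ sinh s' − x₂ cosh s' = −1), then x is future time-like: x₂ > 0 and x₁² − x₂² < 0. -/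
/-- The intersection point of two distinct tangent lines to the hyperbola `𝐇` of
unit future time-like vectors is itself future time-like. -/
theorem intersection_of_tangent_lines_is_future_timelike
    (s s' : ℝ) (hss' : s ≠ s') (x₁ x₂ : ℝ)
    (hu : x₁ * Real.sinh s - x₂ * Real.cosh s = -1)
    (hv : x₁ * Real.sinh s' - x₂ * Real.cosh s' = -1) :
    0 < x₂ ∧ x₁ ^ 2 - x₂ ^ 2 < 0 := by
  have hx2 : x₂ * Real.sinh (s - s') = Real.sinh s - Real.sinh s' := by
    rw [Real.sinh_sub]
    linear_combination Real.sinh s' * hu - Real.sinh s * hv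
  have hx1 : x₁ * Real.sinh (s - s') = Real.cosh s - Real.cosh s' := by
    rw [Real.sinh_sub]
    linear_combination Real.cosh s' * hu - Real.cosh s * hv
  have hcosh : 1 < Real.cosh (s - s') := by
    rw [Real.one_lt_cosh]
    exact sub_ne_zero.mpr hss'
  have hpos : 0 < x₂ := by
    rcases lt_or_gt_of_ne hss' with h | h
    · have h1 : Real.sinh s < Real.sinh s' := Real.sinh_lt_sinh.mpr h
      have h2 : Real.sinh (s - s') < 0 := by
        have := Real.sinh_lt_sinh.mpr (show s - s' < 0 by linarith)
        simpa using this
      nlinarith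
    · have h1 : Real.sinh s' < Real.sinh s := Real.sinh_lt_sinh.mpr h
      have h2 : 0 < Real.sinh (s - s') := by
        have := Real.sinh_lt_sinh.mpr (show (0:ℝ) < s - s' by linarith)
        simpa using this
      nlinarith
  refine ⟨hpos, ?_⟩
  have hk : (0:ℝ) < Real.sinh (s - s') ^ 2 := by
    have : Real.sinh (s - s') ≠ 0 := by
      rw [Real.sinh_ne_zero]
      exact sub_ne_zero.mpr hss'
    positivity
  have key : (x₁ ^ 2 - x₂ ^ 2) * Real.sinh (s - s') ^ 2
      = 2 - 2 * Real.cosh (s - s') := by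
    have e1 := Real.cosh_sq_sub_sinh_sq s
    have e2 := Real.cosh_sq_sub_sinh_sq s'
    rw [Real.cosh_sub]
    linear_combination (x₁ * Real.sinh (s - s') + Real.cosh s - Real.cosh s') * hx1 -
      (x₂ * Real.sinh (s - s') + Real.sinh s - Real.sinh s') * hx2 + e1 + e2
  nlinarith [key, hk, hcosh]
end

section
/- Let n ≥ 3 and let φ : ZMod n → ℝ be positive. The matrix (B(e_k, e_j))_{k,j} of the mixed-coarea form in the standard basis is strictly diagonally dominant: for every k ∈ ZMod n, Σ_{j ≠ k} |B(e_k, e_j)| < B(e_k, e_k), i.e. 1/(2 sinh φ_{k−1}) + 1/(2 sinh φ_k) < (1/2)(cosh φ_{k−1}/sinh φ_{k−1} + cosh φ_k/sinh φ_k). -/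
/-- The mixed-coarea bilinear form on `ℝ^{ZMod n}` associated to the
angles `φ : ZMod n → ℝ`. -/
noncomputable def mixedCoarea (n : ℕ) [NeZero n] (φ : ZMod n → ℝ) (h k : ZMod n → ℝ) : ℝ :=
  (1 / 2) * ∑ i : ZMod n,
    h i * ((k i * Real.cosh (φ (i - 1)) - k (i - 1)) / Real.sinh (φ (i - 1))
      + (k i * Real.cosh (φ i) - k (i + 1)) / Real.sinh (φ i))

lemma mixedCoarea_single_left (n : ℕ) [NeZero n] (φ : ZMod n → ℝ) (k : ZMod n)
    (g : ZMod n → ℝ) :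
    mixedCoarea n φ (Pi.single k 1) g =
      (1 / 2) * ((g k * Real.cosh (φ (k - 1)) - g (k - 1)) / Real.sinh (φ (k - 1))
        + (g k * Real.cosh (φ k) - g (k + 1)) / Real.sinh (φ k)) := by
  unfold mixedCoarea
  congr 1
  rw [Finset.sum_eq_single k]
  · simp
  · intro i _ hi
    simp [Pi.single_apply, hi]
  · simp

/-- The matrix of the mixed-coarea bilinear form in the standard basis is strictly
diagonally dominant. -/
theorem mixedCoarea_strictly_diagonally_dominant (n : ℕ) [NeZero n] (hn : 3 ≤ n)
    (φ : ZMod n → ℝ) (hφ : ∀ i, 0 < φ i) (k : ZMod n) :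
    (∑ j ∈ Finset.univ.erase k, |mixedCoarea n φ (Pi.single k 1) (Pi.single j 1)|)
      < mixedCoarea n φ (Pi.single k 1) (Pi.single k 1) ∧
    1 / (2 * Real.sinh (φ (k - 1))) + 1 / (2 * Real.sinh (φ k))
      < (1 / 2) * (Real.cosh (φ (k - 1)) / Real.sinh (φ (k - 1))
          + Real.cosh (φ k) / Real.sinh (φ k)) := by
  haveI : Fact (1 < n) := ⟨by omega⟩
  have h1 : (1 : ZMod n) ≠ 0 := one_ne_zero
  have h2 : (2 : ZMod n) ≠ 0 := by
    intro h
    have hd : n ∣ 2 := by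
      have := (ZMod.natCast_eq_zero_iff 2 n).mp (by exact_mod_cast h)
      exact this
    have := Nat.le_of_dvd (by norm_num) hd
    omega
  have hkm : k - 1 ≠ k := by
    intro h; apply h1; linear_combination -h
  have hkp : k + 1 ≠ k := by
    intro h; apply h1; linear_combination h
  have hmp : k - 1 ≠ k + 1 := by
    intro h; apply h2; linear_combination -h
  have hs1 : 0 < Real.sinh (φ (k - 1)) := Real.sinh_pos_iff.mpr (hφ _)
  have hs2 : 0 < Real.sinh (φ k) := Real.sinh_pos_iff.mpr (hφ _)
  have hc1 : 1 < Real.cosh (φ (k - 1)) := Real.one_lt_cosh.mpr (ne_of_gt (hφ _))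
  have hc2 : 1 < Real.cosh (φ k) := Real.one_lt_cosh.mpr (ne_of_gt (hφ _))
  have hdiag : mixedCoarea n φ (Pi.single k 1) (Pi.single k 1)
      = (1 / 2) * (Real.cosh (φ (k - 1)) / Real.sinh (φ (k - 1))
          + Real.cosh (φ k) / Real.sinh (φ k)) := by
    rw [mixedCoarea_single_left]
    rw [Pi.single_eq_same, Pi.single_eq_of_ne hkm, Pi.single_eq_of_ne hkp]
    ring
  have key : 1 / (2 * Real.sinh (φ (k - 1))) + 1 / (2 * Real.sinh (φ k))
      < (1 / 2) * (Real.cosh (φ (k - 1)) / Real.sinh (φ (k - 1))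
          + Real.cosh (φ k) / Real.sinh (φ k)) := by
    have A : 1 / (2 * Real.sinh (φ (k - 1))) < Real.cosh (φ (k - 1)) / (2 * Real.sinh (φ (k - 1))) :=
      (div_lt_div_iff_of_pos_right (by positivity)).mpr hc1
    have B : 1 / (2 * Real.sinh (φ k)) < Real.cosh (φ k) / (2 * Real.sinh (φ k)) :=
      (div_lt_div_iff_of_pos_right (by positivity)).mpr hc2
    have := add_lt_add A B
    calc 1 / (2 * Real.sinh (φ (k - 1))) + 1 / (2 * Real.sinh (φ k))
        < Real.cosh (φ (k - 1)) / (2 * Real.sinh (φ (k - 1)))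
          + Real.cosh (φ k) / (2 * Real.sinh (φ k)) := this
      _ = (1 / 2) * (Real.cosh (φ (k - 1)) / Real.sinh (φ (k - 1))
          + Real.cosh (φ k) / Real.sinh (φ k)) := by ring
  refine ⟨?_, key⟩
  have hsum : (∑ j ∈ Finset.univ.erase k, |mixedCoarea n φ (Pi.single k 1) (Pi.single j 1)|)
      = 1 / (2 * Real.sinh (φ (k - 1))) + 1 / (2 * Real.sinh (φ k)) := by
    have hsub : ({k - 1, k + 1} : Finset (ZMod n)) ⊆ Finset.univ.erase k := by
      intro j hj
      simp only [Finset.mem_insert, Finset.mem_singleton] at hj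
      rcases hj with h | h <;> simp [h, hkm, hkp]
    rw [← Finset.sum_subset hsub]
    · rw [Finset.sum_insert (by simpa using hmp), Finset.sum_singleton]
      rw [mixedCoarea_single_left, mixedCoarea_single_left]
      rw [Pi.single_eq_same, Pi.single_eq_same,
        Pi.single_eq_of_ne hkm.symm, Pi.single_eq_of_ne hkp.symm,
        Pi.single_eq_of_ne hmp.symm, Pi.single_eq_of_ne hmp]
      have e1 : (1 / 2 : ℝ) * ((0 * Real.cosh (φ (k - 1)) - 1) / Real.sinh (φ (k - 1))
          + (0 * Real.cosh (φ k) - 0) / Real.sinh (φ k))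
          = -(1 / (2 * Real.sinh (φ (k - 1)))) := by
        field_simp
        ring
      have e2 : (1 / 2 : ℝ) * ((0 * Real.cosh (φ (k - 1)) - 0) / Real.sinh (φ (k - 1))
          + (0 * Real.cosh (φ k) - 1) / Real.sinh (φ k))
          = -(1 / (2 * Real.sinh (φ k))) := by
        field_simp
        ring
      rw [e1, e2, abs_neg, abs_neg, abs_of_pos (by positivity), abs_of_pos (by positivity)]
    · intro j hj hj'
      simp only [Finset.mem_insert, Finset.mem_singleton, not_or] at hj'
      have hjk : j ≠ k := (Finset.mem_erase.mp hj).1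
      rw [mixedCoarea_single_left]
      rw [Pi.single_eq_of_ne hjk.symm, Pi.single_eq_of_ne (Ne.symm hj'.1),
        Pi.single_eq_of_ne (Ne.symm hj'.2)]
      simp
  rw [hsum, hdiag]
  exact key
end

section
/- Let n ≥ 1 and let φ : ZMod n → ℝ be positive. For all h, k ∈ ℝ^{ZMod n}, B(h,k)² ≤ Q(h)·Q(k) (reversed Minkowski inequality). Moreover, if all the entries of h and of k are positive, then equality holds if and only if there exists λ > 0 with h_i = λ k_i for all i. -/
lemma mixedCoarea_symmform (n : ℕ) [NeZero n] (φ h k : ZMod n → ℝ) :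
    mixedCoarea n φ h k = ∑ i : ZMod n,
      ((h i * k i + h (i+1) * k (i+1)) * Real.cosh (φ i)
        - (h i * k (i+1) + h (i+1) * k i)) / (2 * Real.sinh (φ i)) := by
  unfold mixedCoarea
  rw [Finset.mul_sum]
  have key : ∀ i : ZMod n,
      1/2 * (h i * ((k i * Real.cosh (φ (i-1)) - k (i-1)) / Real.sinh (φ (i-1))
        + (k i * Real.cosh (φ i) - k (i+1)) / Real.sinh (φ i)))
      = h i * (k i * Real.cosh (φ (i-1)) - k (i-1)) / (2 * Real.sinh (φ (i-1)))
        + h i * (k i * Real.cosh (φ i) - k (i+1)) / (2 * Real.sinh (φ i)) := by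
    intro i; ring
  simp_rw [key]
  rw [Finset.sum_add_distrib]
  have shift : ∑ i : ZMod n, h i * (k i * Real.cosh (φ (i-1)) - k (i-1)) / (2 * Real.sinh (φ (i-1)))
      = ∑ i : ZMod n, h (i+1) * (k (i+1) * Real.cosh (φ i) - k i) / (2 * Real.sinh (φ i)) := by
    apply Fintype.sum_equiv (Equiv.subRight (1 : ZMod n))
    intro i
    simp [Equiv.subRight, sub_add_cancel]
  rw [shift, ← Finset.sum_add_distrib]
  apply Finset.sum_congr rfl
  intro i _; ring

lemma mixedCoarea_comm (n : ℕ) [NeZero n] (φ h k : ZMod n → ℝ) :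
    mixedCoarea n φ h k = mixedCoarea n φ k h := by
  rw [mixedCoarea_symmform, mixedCoarea_symmform]
  exact Finset.sum_congr rfl fun i _ => by ring

lemma mixedCoarea_smul_left (n : ℕ) [NeZero n] (φ k g : ZMod n → ℝ) (c : ℝ) :
    mixedCoarea n φ (fun i => c * k i) g = c * mixedCoarea n φ k g := by
  rw [mixedCoarea_symmform, mixedCoarea_symmform, Finset.mul_sum]
  exact Finset.sum_congr rfl fun i _ => by ring

lemma mixedCoarea_expand (n : ℕ) [NeZero n] (φ h k : ZMod n → ℝ) (c : ℝ) :
    mixedCoarea n φ (fun i => h i - c * k i) (fun i => h i - c * k i)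
      = mixedCoarea n φ h h - 2 * c * mixedCoarea n φ h k
        + c ^ 2 * mixedCoarea n φ k k := by
  simp only [mixedCoarea_symmform, Finset.mul_sum, ← Finset.sum_sub_distrib,
    ← Finset.sum_add_distrib]
  exact Finset.sum_congr rfl fun i _ => by ring

/-- Each term of the symmetric form of `Q(h)` is nonnegative. -/
lemma term_nonneg (n : ℕ) [NeZero n] (φ h : ZMod n → ℝ) (hφ : ∀ i, 0 < φ i) (i : ZMod n) :
    0 ≤ ((h i * h i + h (i+1) * h (i+1)) * Real.cosh (φ i)
        - (h i * h (i+1) + h (i+1) * h i)) / (2 * Real.sinh (φ i)) := by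
  have hs : 0 < Real.sinh (φ i) := Real.sinh_pos_iff.2 (hφ i)
  have hc : 1 < Real.cosh (φ i) := by
    rw [Real.one_lt_cosh]; exact ne_of_gt (hφ i)
  apply div_nonneg _ (by linarith)
  nlinarith [sq_nonneg (h i - h (i+1)), sq_nonneg (h i), sq_nonneg (h (i+1))]

lemma mixedCoarea_self_nonneg (n : ℕ) [NeZero n] (φ h : ZMod n → ℝ) (hφ : ∀ i, 0 < φ i) :
    0 ≤ mixedCoarea n φ h h := by
  rw [mixedCoarea_symmform]
  exact Finset.sum_nonneg fun i _ => term_nonneg n φ h hφ i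

lemma mixedCoarea_self_eq_zero (n : ℕ) [NeZero n] (φ h : ZMod n → ℝ) (hφ : ∀ i, 0 < φ i)
    (hQ : mixedCoarea n φ h h = 0) : ∀ i, h i = 0 := by
  rw [mixedCoarea_symmform] at hQ
  have hall := (Finset.sum_eq_zero_iff_of_nonneg
    (fun i _ => term_nonneg n φ h hφ i)).1 hQ
  intro i
  have hi := hall i (Finset.mem_univ i)
  have hs : 0 < Real.sinh (φ i) := Real.sinh_pos_iff.2 (hφ i)
  have hc : 1 < Real.cosh (φ i) := by
    rw [Real.one_lt_cosh]; exact ne_of_gt (hφ i)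
  have hnum : (h i * h i + h (i+1) * h (i+1)) * Real.cosh (φ i)
      - (h i * h (i+1) + h (i+1) * h i) = 0 :=
    (div_eq_zero_iff.1 hi).resolve_right (by positivity)
  have hsq : h i ^ 2 ≤ 0 := by
    nlinarith [sq_nonneg (h i - h (i+1)), sq_nonneg (h (i+1))]
  have h2 : h i ^ 2 = 0 := le_antisymm hsq (sq_nonneg _)
  exact pow_eq_zero_iff two_ne_zero |>.1 h2

/-- The reversed Minkowski inequality: `B(h,k)² ≤ Q(h)·Q(k)`, with equality (for vectors
with positive entries) if and only if `h` and `k` are homothetic. -/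
theorem reversed_minkowski_inequality (n : ℕ) [NeZero n]
    (φ : ZMod n → ℝ) (hφ : ∀ i, 0 < φ i) (h k : ZMod n → ℝ) :
    mixedCoarea n φ h k ^ 2 ≤ mixedCoarea n φ h h * mixedCoarea n φ k k ∧
    ((∀ i, 0 < h i) → (∀ i, 0 < k i) →
      (mixedCoarea n φ h k ^ 2 = mixedCoarea n φ h h * mixedCoarea n φ k k ↔
        ∃ lam : ℝ, 0 < lam ∧ ∀ i, h i = lam * k i)) := by
  have hQh := mixedCoarea_self_nonneg n φ h hφ
  have hQk := mixedCoarea_self_nonneg n φ k hφ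
  -- main Cauchy-Schwarz machinery
  have main : ∀ (hk : 0 < mixedCoarea n φ k k),
      mixedCoarea n φ h k ^ 2 ≤ mixedCoarea n φ h h * mixedCoarea n φ k k ∧
      (mixedCoarea n φ h k ^ 2 = mixedCoarea n φ h h * mixedCoarea n φ k k →
        ∀ i, h i = (mixedCoarea n φ h k / mixedCoarea n φ k k) * k i) := by
    intro hk
    set t : ℝ := mixedCoarea n φ h k / mixedCoarea n φ k k with ht
    have hexp := mixedCoarea_expand n φ h k t
    have hval : mixedCoarea n φ h h - 2 * t * mixedCoarea n φ h k
        + t ^ 2 * mixedCoarea n φ k k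
        = mixedCoarea n φ h h - mixedCoarea n φ h k ^ 2 / mixedCoarea n φ k k := by
      field_simp [ht]
      have ht' : t * mixedCoarea n φ k k = mixedCoarea n φ h k := by
        rw [ht]; exact div_mul_cancel₀ _ hk.ne'
      linear_combination (t * mixedCoarea n φ k k - mixedCoarea n φ h k) * ht'
    have hge := mixedCoarea_self_nonneg n φ (fun i => h i - t * k i) hφ
    rw [hexp, hval] at hge
    constructor
    · exact (div_le_iff₀ hk).1 (by linarith)
    · intro heq i
      have hz : mixedCoarea n φ (fun i => h i - t * k i) (fun i => h i - t * k i) = 0 := by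
        rw [hexp, hval, heq]
        field_simp
        ring
      have := mixedCoarea_self_eq_zero n φ _ hφ hz i
      simp only [sub_eq_zero] at this
      exact this
  rcases eq_or_lt_of_le hQk with hk0 | hkpos
  · -- Q(k) = 0, so k = 0 and B(h,k) = 0
    have hk0' : ∀ i, k i = 0 := mixedCoarea_self_eq_zero n φ k hφ hk0.symm
    have hB : mixedCoarea n φ h k = 0 := by
      rw [mixedCoarea_symmform]
      apply Finset.sum_eq_zero
      intro i _
      simp [hk0' i, hk0' (i+1)]
    constructor
    · rw [hB, ← hk0]; ring_nf; exact le_refl 0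
    · intro _ hkpos'
      exact absurd (hk0' 0) (ne_of_gt (hkpos' 0))
  · obtain ⟨hineq, heqcase⟩ := main hkpos
    refine ⟨hineq, fun hh hk => ⟨fun heq => ?_, fun ⟨lam, hlam, hlk⟩ => ?_⟩⟩
    · refine ⟨mixedCoarea n φ h k / mixedCoarea n φ k k, ?_, heqcase heq⟩
      have h0 := heqcase heq 0
      by_contra hneg
      push_neg at hneg
      nlinarith [hh 0, hk 0]
    · have hsl : mixedCoarea n φ h k = lam * mixedCoarea n φ k k := by
        have : h = fun i => lam * k i := funext hlk
        rw [this, mixedCoarea_smul_left]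
      have hss : mixedCoarea n φ h h = lam ^ 2 * mixedCoarea n φ k k := by
        have : h = fun i => lam * k i := funext hlk
        rw [this, mixedCoarea_smul_left, mixedCoarea_comm, mixedCoarea_smul_left]
        ring
      rw [hsl, hss]; ring
end

section
/- For all positive real numbers a, b, c, define θ_a = arccos √( sinh b · sinh c / (sinh(a+b) · sinh(a+c)) ), θ_b = arccos √( sinh a · sinh c / (sinh(b+a) · sinh(b+c)) ), θ_c = arccos √( sinh a · sinh b / (sinh(c+a) · sinh(c+b)) ). Then cos(θ_a + θ_b + θ_c) = ( sinh a sinh b sinh c − sinh(a+b+c)·(sinh a sinh b + sinh b sinh c + sinh c sinh a) ) / ( sinh(a+b) · sinh(b+c) · sinh(c+a) ). -/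
open Real

private lemma sinh_key (x y z : ℝ) :
    Real.sinh (x + y) * Real.sinh (x + z) - Real.sinh y * Real.sinh z
      = Real.sinh x * Real.sinh (x + y + z) := by
  simp only [Real.sinh_eq, Real.exp_add, Real.exp_neg, Real.exp_add]
  have hx := Real.exp_ne_zero x
  have hy := Real.exp_ne_zero y
  have hz := Real.exp_ne_zero z
  field_simp
  ring

private lemma cos_sin_arccos_sqrt (p q r : ℝ) (hp : 0 ≤ p) (hr : 0 ≤ r) (hq : 0 < q)
    (h : q - p = r) :
    Real.cos (Real.arccos (Real.sqrt (p / q))) = Real.sqrt p / Real.sqrt q ∧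
    Real.sin (Real.arccos (Real.sqrt (p / q))) = Real.sqrt r / Real.sqrt q := by
  have hpq : p / q ≤ 1 := (div_le_one hq).2 (by linarith)
  have h0 : 0 ≤ p / q := div_nonneg hp hq.le
  have hle : Real.sqrt (p / q) ≤ 1 := by
    nlinarith [Real.sq_sqrt h0, Real.sqrt_nonneg (p / q)]
  constructor
  · rw [Real.cos_arccos (by nlinarith [Real.sqrt_nonneg (p / q)]) hle,
      Real.sqrt_div hp]
  · rw [Real.sin_arccos, Real.sq_sqrt h0,
      show 1 - p / q = r / q by field_simp; linarith, Real.sqrt_div hr]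

/-- The cone-angle computation: half the cone angle around the codimension 2 stratum
`S` of the spherical cone-manifold `𝒞` is the sum of the three distinct dihedral
angles `θ_a + θ_b + θ_c`, and its cosine is given by the stated formula. -/
theorem cone_angle_cosine (a b c : ℝ) (ha : 0 < a) (hb : 0 < b) (hc : 0 < c) :
    Real.cos
        (Real.arccos (Real.sqrt (Real.sinh b * Real.sinh c /
            (Real.sinh (a + b) * Real.sinh (a + c))))
          + Real.arccos (Real.sqrt (Real.sinh a * Real.sinh c /
              (Real.sinh (b + a) * Real.sinh (b + c))))
          + Real.arccos (Real.sqrt (Real.sinh a * Real.sinh b /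
              (Real.sinh (c + a) * Real.sinh (c + b)))))
      = (Real.sinh a * Real.sinh b * Real.sinh c
          - Real.sinh (a + b + c) * (Real.sinh a * Real.sinh b
              + Real.sinh b * Real.sinh c + Real.sinh c * Real.sinh a))
        / (Real.sinh (a + b) * Real.sinh (b + c) * Real.sinh (c + a)) := by
  rw [show b + a = a + b from add_comm b a, show c + a = a + c from add_comm c a,
    show c + b = b + c from add_comm c b]
  set sa := Real.sinh a with hsa_def
  set sb := Real.sinh b with hsb_def
  set sc := Real.sinh c with hsc_def
  set Sab := Real.sinh (a + b) with hSab_def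
  set Sac := Real.sinh (a + c) with hSac_def
  set Sbc := Real.sinh (b + c) with hSbc_def
  set T := Real.sinh (a + b + c) with hT_def
  have hsa : 0 < sa := Real.sinh_pos_iff.2 ha
  have hsb : 0 < sb := Real.sinh_pos_iff.2 hb
  have hsc : 0 < sc := Real.sinh_pos_iff.2 hc
  have hSab : 0 < Sab := Real.sinh_pos_iff.2 (by linarith)
  have hSac : 0 < Sac := Real.sinh_pos_iff.2 (by linarith)
  have hSbc : 0 < Sbc := Real.sinh_pos_iff.2 (by linarith)
  have hT : 0 < T := Real.sinh_pos_iff.2 (by linarith)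
  have kA : Sab * Sac - sb * sc = sa * T := sinh_key a b c
  have kB : Sab * Sbc - sa * sc = sb * T := by
    have h := sinh_key b a c
    rw [add_comm b a] at h
    rw [← hSab_def, ← hSbc_def, ← hsa_def, ← hsb_def, ← hsc_def, ← hT_def] at h
    linarith
  have kC : Sac * Sbc - sa * sb = sc * T := by
    have h := sinh_key c a b
    rw [add_comm c a, add_comm c b, show a + c + b = a + b + c by ring] at h
    rw [← hSac_def, ← hSbc_def, ← hsa_def, ← hsb_def, ← hsc_def, ← hT_def] at h
    linarith
  obtain ⟨cA, sA⟩ := cos_sin_arccos_sqrt (sb * sc) (Sab * Sac) (sa * T)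
    (by positivity) (by positivity) (by positivity) kA
  obtain ⟨cB, sB⟩ := cos_sin_arccos_sqrt (sa * sc) (Sab * Sbc) (sb * T)
    (by positivity) (by positivity) (by positivity) kB
  obtain ⟨cC, sC⟩ := cos_sin_arccos_sqrt (sa * sb) (Sac * Sbc) (sc * T)
    (by positivity) (by positivity) (by positivity) kC
  rw [Real.cos_add, Real.cos_add, Real.sin_add, cA, sA, cB, sB, cC, sC]
  have sq3 : ∀ x y z w : ℝ, 0 ≤ x → 0 ≤ y → 0 ≤ w →
      x * y * z = w ^ 2 → Real.sqrt x * Real.sqrt y * Real.sqrt z = w := by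
    intro x y z w hx hy hw h
    rw [← Real.sqrt_mul hx, ← Real.sqrt_mul (by positivity), h, Real.sqrt_sq hw]
  have eD : Real.sqrt (Sab * Sac) * Real.sqrt (Sab * Sbc) * Real.sqrt (Sac * Sbc)
      = Sab * Sbc * Sac := sq3 _ _ _ _ (by positivity) (by positivity) (by positivity)
      (by ring)
  have e1 : Real.sqrt (sb * sc) * Real.sqrt (sa * sc) * Real.sqrt (sa * sb)
      = sa * sb * sc := sq3 _ _ _ _ (by positivity) (by positivity) (by positivity)
      (by ring)
  have e2 : Real.sqrt (sb * sc) * Real.sqrt (sb * T) * Real.sqrt (sc * T)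
      = sb * sc * T := sq3 _ _ _ _ (by positivity) (by positivity) (by positivity)
      (by ring)
  have e3 : Real.sqrt (sa * T) * Real.sqrt (sa * sc) * Real.sqrt (sc * T)
      = sa * sc * T := sq3 _ _ _ _ (by positivity) (by positivity) (by positivity)
      (by ring)
  have e4 : Real.sqrt (sa * T) * Real.sqrt (sb * T) * Real.sqrt (sa * sb)
      = sa * sb * T := sq3 _ _ _ _ (by positivity) (by positivity) (by positivity)
      (by ring)
  have T1 : Real.sqrt (sb * sc) / Real.sqrt (Sab * Sac) *
      (Real.sqrt (sa * sc) / Real.sqrt (Sab * Sbc)) *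
      (Real.sqrt (sa * sb) / Real.sqrt (Sac * Sbc)) = sa * sb * sc / (Sab * Sbc * Sac) := by
    rw [div_mul_div_comm, div_mul_div_comm, e1, eD]
  have T2 : Real.sqrt (sb * sc) / Real.sqrt (Sab * Sac) *
      (Real.sqrt (sb * T) / Real.sqrt (Sab * Sbc)) *
      (Real.sqrt (sc * T) / Real.sqrt (Sac * Sbc)) = sb * sc * T / (Sab * Sbc * Sac) := by
    rw [div_mul_div_comm, div_mul_div_comm, e2, eD]
  have T3 : Real.sqrt (sa * T) / Real.sqrt (Sab * Sac) *
      (Real.sqrt (sa * sc) / Real.sqrt (Sab * Sbc)) *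
      (Real.sqrt (sc * T) / Real.sqrt (Sac * Sbc)) = sa * sc * T / (Sab * Sbc * Sac) := by
    rw [div_mul_div_comm, div_mul_div_comm, e3, eD]
  have T4 : Real.sqrt (sa * T) / Real.sqrt (Sab * Sac) *
      (Real.sqrt (sb * T) / Real.sqrt (Sab * Sbc)) *
      (Real.sqrt (sa * sb) / Real.sqrt (Sac * Sbc)) = sa * sb * T / (Sab * Sbc * Sac) := by
    rw [div_mul_div_comm, div_mul_div_comm, e4, eD]
  have hD : (Sab * Sbc * Sac : ℝ) ≠ 0 := by positivity
  field_simp at T1 T2 T3 T4 ⊢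
  linear_combination T1 - T2 - T3 - T4
end

section
/- The function g : (0, ∞) → ℝ defined by g(φ) = −(2 cosh²φ + sinh²φ) / (2 cosh³φ) is strictly monotone (strictly increasing) and maps (0, ∞) bijectively onto the open interval (−1, 0). -/
open Real

private lemma g_eq (φ : ℝ) :
    -(2 * Real.cosh φ ^ 2 + Real.sinh φ ^ 2) / (2 * Real.cosh φ ^ 3)
      = (1 - 3 * Real.cosh φ ^ 2) / (2 * Real.cosh φ ^ 3) := by
  rw [Real.sinh_sq]; ring_nf

private lemma h_mono {a b : ℝ} (ha : 1 < a) (hab : a < b) :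
    (1 - 3 * a ^ 2) / (2 * a ^ 3) < (1 - 3 * b ^ 2) / (2 * b ^ 3) := by
  have ha0 : (0:ℝ) < a := by linarith
  have hb0 : (0:ℝ) < b := by linarith
  rw [div_lt_div_iff₀ (by positivity) (by positivity)]
  have hba : 0 < b - a := by linarith
  have h1 : 0 ≤ b ^ 2 * (a ^ 2 - 1) := mul_nonneg (sq_nonneg b) (by nlinarith)
  have h2 : 0 < a * b * (a * b - 1) := by nlinarith
  have h3 : 0 < a ^ 2 * (b ^ 2 - 1) := by nlinarith
  nlinarith [mul_nonneg hba.le h1, mul_pos hba h2, mul_pos hba h3]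

private lemma g_mem {φ : ℝ} (hφ : 0 < φ) :
    (1 - 3 * Real.cosh φ ^ 2) / (2 * Real.cosh φ ^ 3) ∈ Set.Ioo (-1 : ℝ) 0 := by
  have hc : 1 < Real.cosh φ := Real.one_lt_cosh.2 (ne_of_gt hφ)
  have hc0 : (0:ℝ) < Real.cosh φ := by linarith
  constructor
  · rw [lt_div_iff₀ (by positivity)]
    nlinarith [sq_nonneg (Real.cosh φ - 1)]
  · apply div_neg_of_neg_of_pos
    · nlinarith
    · positivity

/-- The function `g(φ) = −(2cosh²φ + sinh²φ)/(2cosh³φ)` is strictly increasing on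
`(0,∞)` and maps `(0,∞)` bijectively onto `(−1,0)`; hence every cone angle
`Θ ∈ (2π, 3π)` is uniquely attained. -/
theorem cone_angle_function_bijective :
    StrictMonoOn
      (fun φ : ℝ => -(2 * Real.cosh φ ^ 2 + Real.sinh φ ^ 2) / (2 * Real.cosh φ ^ 3))
      (Set.Ioi 0) ∧
    Set.BijOn
      (fun φ : ℝ => -(2 * Real.cosh φ ^ 2 + Real.sinh φ ^ 2) / (2 * Real.cosh φ ^ 3))
      (Set.Ioi 0) (Set.Ioo (-1) 0) := by
  set f : ℝ → ℝ :=
    fun φ : ℝ => -(2 * Real.cosh φ ^ 2 + Real.sinh φ ^ 2) / (2 * Real.cosh φ ^ 3) with hf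
  have hmono : StrictMonoOn f (Set.Ioi 0) := by
    intro x hx y hy hxy
    simp only [hf, g_eq]
    exact h_mono (Real.one_lt_cosh.2 (ne_of_gt hx))
      (Real.cosh_lt_cosh.2 (by rw [abs_of_pos hx, abs_of_pos (lt_trans hx hxy)]; exact hxy))
  refine ⟨hmono, ?_, hmono.injOn, ?_⟩
  · intro φ hφ
    rw [hf]; simp only [g_eq]
    exact g_mem hφ
  · -- surjectivity
    intro y hy
    obtain ⟨hy1, hy0⟩ := hy
    -- choose M with cosh M large enough
    set M : ℝ := max 1 (2 * (3 / (2 * (-y)))) with hM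
    have hM1 : (1:ℝ) ≤ M := le_max_left _ _
    have hy0' : 0 < -y := by linarith
    have hK : 3 / (2 * (-y)) < Real.cosh M := by
      have h1 : Real.exp M / 2 ≤ Real.cosh M := by
        rw [Real.cosh_eq]
        have := Real.exp_pos (-M)
        linarith
      have h2 : M + 1 ≤ Real.exp M := Real.add_one_le_exp M
      have h3 : 2 * (3 / (2 * (-y))) ≤ M := le_max_right _ _
      linarith
    have hcM : 1 < Real.cosh M := Real.one_lt_cosh.2 (by positivity)
    have hfM : y < f M := by
      rw [hf]; simp only [g_eq]
      have hc0 : (0:ℝ) < Real.cosh M := by linarith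
      have key : y < -3 / (2 * Real.cosh M) := by
        rw [div_lt_iff₀ (by positivity)] at hK
        rw [lt_div_iff₀ (by positivity)]
        nlinarith
      have : -3 / (2 * Real.cosh M) ≤ (1 - 3 * Real.cosh M ^ 2) / (2 * Real.cosh M ^ 3) := by
        rw [div_le_div_iff₀ (by positivity) (by positivity)]
        nlinarith [sq_nonneg (Real.cosh M)]
      linarith
    have hf0 : f 0 = -1 := by
      rw [hf]; simp [Real.cosh_zero, Real.sinh_zero]
    have hcont : ContinuousOn f (Set.Icc 0 M) := by
      apply ContinuousOn.div
      · fun_prop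
      · fun_prop
      · intro x _
        have := Real.cosh_pos (x := x)
        positivity
    have hsub : Set.Ioo (f 0) (f M) ⊆ f '' Set.Ioo 0 M :=
      intermediate_value_Ioo (by linarith) hcont
    have hymem : y ∈ Set.Ioo (f 0) (f M) := by rw [hf0]; exact ⟨hy1, hfM⟩
    obtain ⟨x, hx, hfx⟩ := hsub hymem
    exact ⟨x, hx.1, hfx⟩
end
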